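/- Let (m_n) be an increasing and unbounded sequence of positive integers. Then there exists a sequence (λ_n) of points of the open unit disk 𝔻 such that (λ_n) with multiplicities (m_n) is strongly separated, i.e., inf_n ∏_{k≠n} ρ(λ_n, λ_k)^{m_k} > 0, but not uniformly strongly separated, i.e., inf_{z∈𝔻} sup_n ∏_{k≠n} ρ(z, λ_k)^{m_k} = 0. -/

import Mathlib

/-!
Take `λ_k = (P_k - 1)/(P_k + 1)` for a fast-growing sequence of positive integers `P_k`; for such
points `ρ(λ_i, λ_j) = |P_i - P_j| / (P_i + P_j)`. The points come in pairs `{λ_{2j}, λ_{2j+1}}`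
with `P_{2j+1} = 4 m_{2j+1} P_{2j}`, so inside a pair `ρ = 1 - 2/(4 m_{2j+1} + 1)` and, by
Bernoulli, `ρ ^ m_k ≥ 1/2` for both indices `k` of the pair. Consecutive pairs are separated by the
factor `2^(k+5) m_{k+2}`, which makes every other factor at least `1 - 2^{-(k+2)}`; as
`∑ 2^{-(k+2)} ≤ 1/2`, their product is at least `1/2`. Hence every `∏_{k≠n}` is at least `1/4`.

For the failure of uniform separation take `z = (t P_{2j} - 1)/(t P_{2j} + 1)` with
`t² ≤ m_{2j}`, a point between the two points of a pair: `ρ(z, λ_{2j}) = 1 - 2/(1 + t)` and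
`ρ(z, λ_{2j+1}) = 1 - 2t/(t + 4 m_{2j+1})`, and with the exponents `m_{2j} ≥ t²`,
`m_{2j+1} ≥ t` both factors are at most `exp (-t/3)`. Each product omitting one index keeps one of
the two, and `t` can be taken arbitrarily large because `m` is unbounded.
-/

open scoped BigOperators
open Metric Finset

noncomputable def blaschke (τ z : ℂ) : ℂ := (τ - z) / (1 - (starRingEnd ℂ) τ * z)

noncomputable def pseudoHyp (z w : ℂ) : ℝ :=
  ‖z - w‖ / ‖1 - (starRingEnd ℂ) z * w‖

noncomputable def prodExcept (a : ℕ → ℝ) (n : ℕ) : ℝ :=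
  ⨅ N : ℕ, ∏ k ∈ (Finset.range N).erase n, a k

def HinfOn (f : ℂ → ℂ) : Prop :=
  DifferentiableOn ℂ f (Metric.ball 0 1) ∧
    ∃ C : ℝ, ∀ z ∈ Metric.ball (0 : ℂ) 1, ‖f z‖ ≤ C

noncomputable def matApply {d : ℕ} (f : ℂ → ℂ) (M : Matrix (Fin d) (Fin d) ℂ) :
    Matrix (Fin d) (Fin d) ℂ :=
  ∑' k : ℕ, (iteratedDeriv k f 0 / (Nat.factorial k : ℂ)) • M ^ k

noncomputable def matBlaschke {d : ℕ} (M : Matrix (Fin d) (Fin d) ℂ) (z : ℂ) : ℂ :=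
  ((minpoly ℂ M).roots.map (fun μ => blaschke μ z)).prod

lemma pseudoHyp_nonneg (z w : ℂ) : 0 ≤ pseudoHyp z w := by
  unfold pseudoHyp; positivity

lemma pseudoHyp_comm (z w : ℂ) : pseudoHyp z w = pseudoHyp w z := by
  unfold pseudoHyp
  rw [norm_sub_rev z w, ← Complex.norm_conj (1 - _)]
  simp [mul_comm]

lemma pseudoHyp_le_one {z w : ℂ} (hz : z ∈ ball (0 : ℂ) 1) (hw : w ∈ ball (0 : ℂ) 1) :
    pseudoHyp z w ≤ 1 := by
  rw [mem_ball_zero_iff] at hz hw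
  refine div_le_one_of_le₀ ?_ (norm_nonneg _)
  have hdiff : ‖1 - (starRingEnd ℂ) z * w‖ ^ 2 - ‖z - w‖ ^ 2 = (1 - ‖z‖ ^ 2) * (1 - ‖w‖ ^ 2) := by
    simp only [Complex.sq_norm, Complex.normSq_apply, Complex.sub_re, Complex.sub_im,
      Complex.mul_re, Complex.mul_im, Complex.conj_re, Complex.conj_im, Complex.one_re,
      Complex.one_im]
    ring
  have hz1 : ‖z‖ ^ 2 < 1 := by nlinarith [norm_nonneg z]
  have hw1 : ‖w‖ ^ 2 < 1 := by nlinarith [norm_nonneg w]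
  refine le_of_sq_le_sq ?_ (norm_nonneg _)
  nlinarith [mul_pos (sub_pos.2 hz1) (sub_pos.2 hw1)]

lemma one_sub_sum_le_prod_one_sub {ι : Type*} (s : Finset ι) {c : ι → ℝ}
    (hc0 : ∀ i ∈ s, 0 ≤ c i) (hc1 : ∀ i ∈ s, c i ≤ 1) :
    1 - ∑ i ∈ s, c i ≤ ∏ i ∈ s, (1 - c i) := by
  induction s using Finset.cons_induction with
  | empty => simp
  | cons x s hx ih =>
    simp only [Finset.forall_mem_cons] at hc0 hc1
    rw [prod_cons, sum_cons]
    have hs := ih hc0.2 hc1.2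
    have hsum : 0 ≤ ∑ i ∈ s, c i := sum_nonneg hc0.2
    nlinarith [mul_le_mul_of_nonneg_left hs (sub_nonneg.2 hc1.1), mul_nonneg hc0.1 hsum]

lemma mul_prod_erase_le_prod {ι : Type*} [DecidableEq ι] (s : Finset ι) {f : ι → ℝ} {p : ι}
    (hf0 : ∀ i ∈ s, 0 ≤ f i) (hp : f p ≤ 1) :
    f p * ∏ i ∈ s.erase p, f i ≤ ∏ i ∈ s, f i := by
  by_cases hps : p ∈ s
  · exact (mul_prod_erase s f hps).le
  · rw [erase_eq_of_notMem hps]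
    exact mul_le_of_le_one_left (prod_nonneg hf0) hp

lemma sum_half_pow_add_two_le (s : Finset ℕ) : ∑ k ∈ s, (1 / 2 : ℝ) ^ (k + 2) ≤ 1 / 2 := by
  obtain ⟨N, hN⟩ := s.exists_nat_subset_range
  calc ∑ k ∈ s, (1 / 2 : ℝ) ^ (k + 2)
      ≤ ∑ k ∈ range N, (1 / 2 : ℝ) ^ (k + 2) :=
        sum_le_sum_of_subset_of_nonneg hN fun _ _ _ => by positivity
    _ = 1 / 4 * ∑ k ∈ range N, (1 / 2 : ℝ) ^ k := by
        rw [mul_sum]; exact sum_congr rfl fun _ _ => by ring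
    _ ≤ 1 / 2 := by linarith [sum_geometric_two_le N]

lemma pow_le_exp_neg_mul {x : ℝ} (hx : x ≤ 1) (n : ℕ) : (1 - x) ^ n ≤ Real.exp (-(n * x)) := by
  rw [neg_mul_eq_mul_neg, Real.exp_nat_mul]
  exact pow_le_pow_left₀ (sub_nonneg.2 hx) (Real.one_sub_le_exp_neg x) n

lemma le_prodExcept {a : ℕ → ℝ} {n : ℕ} {δ : ℝ}
    (h : ∀ s : Finset ℕ, n ∉ s → δ ≤ ∏ k ∈ s, a k) : δ ≤ prodExcept a n :=
  le_ciInf fun _ => h _ (notMem_erase n _)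

section UnitInterval

variable {a : ℕ → ℝ}

lemma prodExcept_le (ha0 : ∀ k, 0 ≤ a k) (ha1 : ∀ k, a k ≤ 1) {n k : ℕ} (hk : k ≠ n) :
    prodExcept a n ≤ a k := by
  have hbdd : BddBelow (Set.range fun N => ∏ k ∈ (range N).erase n, a k) :=
    ⟨0, by rintro _ ⟨N, rfl⟩; exact prod_nonneg fun k _ => ha0 k⟩
  calc prodExcept a n ≤ ∏ i ∈ (range (k + 1)).erase n, a i := ciInf_le hbdd (k + 1)
    _ ≤ ∏ i ∈ {k}, a i :=
        prod_le_prod_of_subset_of_le_one (by simp [hk]) (fun i _ => ha0 i) fun i _ _ => ha1 i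
    _ = a k := prod_singleton a k

lemma iSup_prodExcept_le_max (ha0 : ∀ k, 0 ≤ a k) (ha1 : ∀ k, a k ≤ 1) {i j : ℕ}
    (hij : i ≠ j) :
    ⨆ n, prodExcept a n ≤ max (a i) (a j) := by
  refine ciSup_le fun n => ?_
  rcases eq_or_ne n i with rfl | hn
  · exact (prodExcept_le ha0 ha1 hij.symm).trans (le_max_right _ _)
  · exact (prodExcept_le ha0 ha1 (Ne.symm hn)).trans (le_max_left _ _)

end UnitInterval

noncomputable def cayley (a : ℝ) : ℂ := ((a - 1) / (a + 1) : ℝ)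

lemma cayley_mem_ball {a : ℝ} (ha : 0 < a) : cayley a ∈ ball (0 : ℂ) 1 := by
  rw [mem_ball_zero_iff, cayley, Complex.norm_real, Real.norm_eq_abs, abs_lt,
    lt_div_iff₀ (by linarith), div_lt_one (by linarith)]
  constructor <;> linarith

lemma pseudoHyp_cayley_of_le {a b : ℝ} (ha : 0 < a) (hab : a ≤ b) :
    pseudoHyp (cayley a) (cayley b) = 1 - 2 * a / (a + b) := by
  have hb : 0 < b := ha.trans_le hab
  have hnum : (a - 1) / (a + 1) - (b - 1) / (b + 1) = 2 * (a - b) / ((a + 1) * (b + 1)) := by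
    field_simp; ring
  have hden : 1 - (a - 1) / (a + 1) * ((b - 1) / (b + 1))
      = 2 * (a + b) / ((a + 1) * (b + 1)) := by
    field_simp; ring
  rw [pseudoHyp, cayley, cayley, Complex.conj_ofReal, ← Complex.ofReal_sub, ← Complex.ofReal_mul,
    ← Complex.ofReal_one, ← Complex.ofReal_sub, hnum, hden, Complex.norm_real, Complex.norm_real,
    Real.norm_eq_abs, Real.norm_eq_abs,
    abs_of_nonpos (div_nonpos_of_nonpos_of_nonneg (by linarith) (by positivity)),
    abs_of_pos (by positivity)]
  field_simp
  ring

namespace SeparatedPairs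

def gap (m : ℕ → ℕ) (k : ℕ) : ℕ := if k % 2 = 0 then 4 * m (k + 1) else 2 ^ (k + 5) * m (k + 2)

def param (m : ℕ → ℕ) : ℕ → ℕ
  | 0 => 1
  | k + 1 => gap m k * param m k

noncomputable def point (m : ℕ → ℕ) (k : ℕ) : ℂ := cayley (param m k)

def partner (n : ℕ) : ℕ := if n % 2 = 0 then n + 1 else n - 1

variable {m : ℕ → ℕ}

lemma param_pos (hpos : ∀ n, 0 < m n) (k : ℕ) : 0 < param m k := by
  induction k with
  | zero => simp [param]
  | succ k ih =>
    refine Nat.mul_pos ?_ ih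
    unfold gap
    split_ifs
    · exact Nat.mul_pos (by norm_num) (hpos _)
    · exact Nat.mul_pos (by positivity) (hpos _)

lemma param_mono (hpos : ∀ n, 0 < m n) : Monotone (param m) :=
  monotone_nat_of_le_succ fun k =>
    Nat.le_mul_of_pos_left _ (Nat.pos_of_mul_pos_right (param_pos hpos (k + 1)))

lemma param_succ_of_even {e : ℕ} (he : e % 2 = 0) :
    param m (e + 1) = 4 * m (e + 1) * param m e := by
  simp [param, gap, he]

lemma pow_mul_mul_param_le (hpos : ∀ n, 0 < m n) (hmono : Monotone m) {i j : ℕ}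
    (hij : i / 2 < j / 2) : 2 ^ (j + 3) * m j * param m i ≤ param m j := by
  obtain ⟨b, hb⟩ : ∃ b, j / 2 = b + 1 := ⟨j / 2 - 1, by omega⟩
  calc 2 ^ (j + 3) * m j * param m i
      ≤ 2 ^ (2 * b + 1 + 5) * m (2 * b + 1 + 2) * param m (2 * b + 1) := by
        refine Nat.mul_le_mul (Nat.mul_le_mul ?_ (hmono (by omega))) (param_mono hpos (by omega))
        exact Nat.pow_le_pow_right two_pos (by omega)
    _ = param m (2 * b + 2) := by simp [param, gap]
    _ ≤ param m j := param_mono hpos (by omega)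

lemma point_mem_ball (hpos : ∀ n, 0 < m n) (k : ℕ) : point m k ∈ ball (0 : ℂ) 1 :=
  cayley_mem_ball (by exact_mod_cast param_pos hpos k)

lemma pseudoHyp_point_of_le (hpos : ∀ n, 0 < m n) {i j : ℕ} (hij : i ≤ j) :
    pseudoHyp (point m i) (point m j)
      = 1 - 2 * (param m i : ℝ) / (param m i + param m j) :=
  pseudoHyp_cayley_of_le (by exact_mod_cast param_pos hpos i)
    (by exact_mod_cast param_mono hpos hij)

lemma pseudoHyp_point_le_one (hpos : ∀ n, 0 < m n) (i j : ℕ) :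
    pseudoHyp (point m i) (point m j) ≤ 1 :=
  pseudoHyp_le_one (point_mem_ball hpos i) (point_mem_ball hpos j)

lemma half_le_pseudoHyp_partner_pow (hpos : ∀ n, 0 < m n) (hmono : Monotone m) (n : ℕ) :
    1 / 2 ≤ pseudoHyp (point m n) (point m (partner n)) ^ m (partner n) := by
  set e := 2 * (n / 2)
  set M := m (e + 1)
  have hρ : pseudoHyp (point m e) (point m (e + 1)) = 1 - 2 / (4 * M + 1) := by
    have hP : (0 : ℝ) < param m e := by exact_mod_cast param_pos hpos e
    rw [pseudoHyp_point_of_le hpos e.le_succ, param_succ_of_even (by omega)]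
    push_cast
    field_simp
    ring
  have hpair : 1 / 2 ≤ pseudoHyp (point m e) (point m (e + 1)) ^ M := by
    have hM : (1 : ℝ) ≤ M := by exact_mod_cast hpos (e + 1)
    have hhalf : (M : ℝ) * (2 / (4 * M + 1)) ≤ 1 / 2 := by
      rw [mul_div_assoc', div_le_iff₀ (by positivity)]
      linarith
    have hle : 2 / (4 * (M : ℝ) + 1) ≤ 2 := div_le_self zero_le_two (by linarith)
    rw [hρ, sub_eq_add_neg]
    calc (1 / 2 : ℝ) ≤ 1 + M * -(2 / (4 * M + 1)) := by linarith
      _ ≤ (1 + -(2 / (4 * M + 1))) ^ M := one_add_mul_le_pow (by linarith) M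
  unfold partner
  split_ifs with hn
  · rwa [show n = e by omega]
  · rw [show n - 1 = e by omega, show n = e + 1 by omega, pseudoHyp_comm]
    exact hpair.trans (pow_le_pow_of_le_one (pseudoHyp_nonneg _ _)
      (pseudoHyp_point_le_one hpos _ _) (hmono e.le_succ))

lemma one_sub_le_pseudoHyp_pow (hpos : ∀ n, 0 < m n) (hmono : Monotone m) {i j k : ℕ}
    (hij : i / 2 < j / 2) (hkj : k ≤ j) :
    1 - (1 / 2) ^ (j + 2) ≤ pseudoHyp (point m i) (point m j) ^ m k := by
  have hx : (0 : ℝ) < param m i := by exact_mod_cast param_pos hpos i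
  have hy : (0 : ℝ) < param m j := by exact_mod_cast param_pos hpos j
  have hgap : 2 ^ (j + 3) * (m j : ℝ) * param m i ≤ param m j := by
    exact_mod_cast pow_mul_mul_param_le hpos hmono hij
  set x : ℝ := (param m i : ℝ)
  set y : ℝ := (param m j : ℝ)
  have hm : (1 : ℝ) ≤ m j := by exact_mod_cast hpos j
  have hmk : (m k : ℝ) ≤ m j := by exact_mod_cast hmono hkj
  have hρ : 1 - 2 * x / y ≤ pseudoHyp (point m i) (point m j) := by
    rw [pseudoHyp_point_of_le hpos (by omega)]
    gcongr
    linarith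
  have hε : (m k : ℝ) * (2 * x / y) ≤ (1 / 2) ^ (j + 2) := by
    rw [mul_div_assoc', div_le_iff₀ hy, div_pow, one_pow, one_div_mul_eq_div,
      le_div_iff₀ (by positivity)]
    calc (m k : ℝ) * (2 * x) * 2 ^ (j + 2) ≤ m j * (2 * x) * 2 ^ (j + 2) := by gcongr
      _ = 2 ^ (j + 3) * m j * x := by ring
      _ ≤ y := hgap
  have hε2 : 2 * x / y ≤ 1 := by
    have h2 : (2 : ℝ) ≤ 2 ^ (j + 3) * m j := by
      nlinarith [le_self_pow₀ (M₀ := ℝ) (a := 2) (by norm_num) (n := j + 3) (by omega)]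
    rw [div_le_one hy]
    nlinarith
  calc 1 - (1 / 2) ^ (j + 2) ≤ 1 + m k * -(2 * x / y) := by linarith
    _ ≤ (1 + -(2 * x / y)) ^ m k := one_add_mul_le_pow (by linarith) _
    _ ≤ pseudoHyp (point m i) (point m j) ^ m k := by
        rw [← sub_eq_add_neg]
        exact pow_le_pow_left₀ (by linarith) hρ _

lemma one_sub_le_pseudoHyp_pow_of_ne (hpos : ∀ n, 0 < m n) (hmono : Monotone m) {k n : ℕ}
    (hkn : k / 2 ≠ n / 2) :
    1 - (1 / 2) ^ (k + 2) ≤ pseudoHyp (point m n) (point m k) ^ m k := by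
  rcases lt_or_gt_of_ne hkn with h | h
  · rw [pseudoHyp_comm]
    refine le_trans ?_ (one_sub_le_pseudoHyp_pow hpos hmono h (by omega))
    exact sub_le_sub_left (pow_le_pow_of_le_one (by norm_num) (by norm_num) (by omega)) 1
  · exact one_sub_le_pseudoHyp_pow hpos hmono h le_rfl

lemma quarter_le_prodExcept (hpos : ∀ n, 0 < m n) (hmono : Monotone m) (n : ℕ) :
    1 / 4 ≤ prodExcept (fun k => pseudoHyp (point m n) (point m k) ^ m k) n := by
  refine le_prodExcept fun s hns => ?_
  set f := fun k => pseudoHyp (point m n) (point m k) ^ m k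
  have hf0 : ∀ k, 0 ≤ f k := fun k => pow_nonneg (pseudoHyp_nonneg _ _) _
  have hc1 : ∀ k : ℕ, (1 / 2 : ℝ) ^ (k + 2) ≤ 1 :=
    fun _ => pow_le_one₀ (by norm_num) (by norm_num)
  have hfar : 1 / 2 ≤ ∏ k ∈ s.erase (partner n), f k := by
    calc (1 / 2 : ℝ) ≤ 1 - ∑ k ∈ s.erase (partner n), (1 / 2 : ℝ) ^ (k + 2) := by
          linarith [sum_half_pow_add_two_le (s.erase (partner n))]
      _ ≤ ∏ k ∈ s.erase (partner n), (1 - (1 / 2 : ℝ) ^ (k + 2)) :=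
          one_sub_sum_le_prod_one_sub _ (fun _ _ => by positivity) fun k _ => hc1 k
      _ ≤ ∏ k ∈ s.erase (partner n), f k := by
          refine prod_le_prod (fun k _ => sub_nonneg.2 (hc1 k)) fun k hk => ?_
          obtain ⟨hkp, hks⟩ := mem_erase.1 hk
          have hkn : k ≠ n := fun h => hns (h ▸ hks)
          refine one_sub_le_pseudoHyp_pow_of_ne hpos hmono ?_
          unfold partner at hkp
          split_ifs at hkp <;> omega
  calc (1 / 4 : ℝ) = 1 / 2 * (1 / 2) := by norm_num
    _ ≤ f (partner n) * ∏ k ∈ s.erase (partner n), f k :=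
        mul_le_mul (half_le_pseudoHyp_partner_pow hpos hmono n) hfar (by norm_num) (hf0 _)
    _ ≤ ∏ k ∈ s, f k :=
        mul_prod_erase_le_prod s (fun k _ => hf0 k)
          (pow_le_one₀ (pseudoHyp_nonneg _ _) (pseudoHyp_point_le_one hpos _ _))

lemma pseudoHyp_cayley_mul_point_pow_le (hpos : ∀ n, 0 < m n) {e t : ℕ} (ht : 1 ≤ t)
    (htm : t * t ≤ m e) :
    pseudoHyp (cayley (t * param m e)) (point m e) ^ m e ≤ Real.exp (-(t / 3)) := by
  have hP : (0 : ℝ) < param m e := by exact_mod_cast param_pos hpos e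
  have ht1 : (1 : ℝ) ≤ t := by exact_mod_cast ht
  have htm' : (t : ℝ) * t ≤ m e := by exact_mod_cast htm
  have hρ : pseudoHyp (cayley (t * param m e)) (point m e) = 1 - 2 / (1 + t) := by
    rw [pseudoHyp_comm, point, pseudoHyp_cayley_of_le hP (le_mul_of_one_le_left hP.le ht1)]
    field_simp
  rw [hρ]
  refine (pow_le_exp_neg_mul (div_le_one_of_le₀ (by linarith) (by linarith)) _).trans ?_
  rw [Real.exp_le_exp, neg_le_neg_iff, mul_div_assoc', le_div_iff₀ (by linarith)]
  nlinarith

lemma pseudoHyp_cayley_mul_point_succ_pow_le (hpos : ∀ n, 0 < m n) (hmono : Monotone m)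
    {e t : ℕ} (he : e % 2 = 0) (ht : 1 ≤ t) (htm : t * t ≤ m e) :
    pseudoHyp (cayley (t * param m e)) (point m (e + 1)) ^ m (e + 1) ≤ Real.exp (-(t / 3)) := by
  have hP : (0 : ℝ) < param m e := by exact_mod_cast param_pos hpos e
  have ht1 : (1 : ℝ) ≤ t := by exact_mod_cast ht
  have htM : (t : ℝ) ≤ m (e + 1) := by
    exact_mod_cast (Nat.le_mul_self t).trans (htm.trans (hmono e.le_succ))
  have hρ : pseudoHyp (cayley (t * param m e)) (point m (e + 1))
      = 1 - 2 * t / (t + 4 * m (e + 1)) := by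
    rw [point, param_succ_of_even he, Nat.cast_mul, Nat.cast_mul,
      pseudoHyp_cayley_of_le (by positivity) (by push_cast; gcongr; linarith)]
    push_cast
    field_simp
  rw [hρ]
  refine (pow_le_exp_neg_mul (div_le_one_of_le₀ (by linarith) (by linarith)) _).trans ?_
  rw [Real.exp_le_exp, neg_le_neg_iff, mul_div_assoc', le_div_iff₀ (by linarith)]
  nlinarith

lemma exists_iSup_prodExcept_le_exp (hpos : ∀ n, 0 < m n) (hmono : Monotone m) {e t : ℕ}
    (he : e % 2 = 0) (ht : 1 ≤ t) (htm : t * t ≤ m e) :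
    ∃ z ∈ ball (0 : ℂ) 1,
      ⨆ n, prodExcept (fun k => pseudoHyp z (point m k) ^ m k) n ≤ Real.exp (-(t / 3)) := by
  have hz : cayley (t * param m e) ∈ ball (0 : ℂ) 1 :=
    cayley_mem_ball (mul_pos (by exact_mod_cast ht) (by exact_mod_cast param_pos hpos e))
  refine ⟨_, hz, (iSup_prodExcept_le_max (fun k => pow_nonneg (pseudoHyp_nonneg _ _) _)
    (fun k => pow_le_one₀ (pseudoHyp_nonneg _ _) (pseudoHyp_le_one hz (point_mem_ball hpos k)))
    e.succ_ne_self.symm).trans (max_le ?_ ?_)⟩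
  · exact pseudoHyp_cayley_mul_point_pow_le hpos ht htm
  · exact pseudoHyp_cayley_mul_point_succ_pow_le hpos hmono he ht htm

end SeparatedPairs

open SeparatedPairs

/-- If the multiplicities increase to infinity, there is a strongly separated sequence in the
unit disk which is not uniformly strongly separated. -/
theorem exists_strongly_separated_not_uniformly
    (m : ℕ → ℕ) (hpos : ∀ n, 0 < m n) (hmono : Monotone m)
    (hunb : ∀ N : ℕ, ∃ n, N < m n) :
    ∃ l : ℕ → ℂ, (∀ n, l n ∈ Metric.ball (0 : ℂ) 1) ∧
      (∃ δ > (0 : ℝ), ∀ n : ℕ,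
          δ ≤ prodExcept (fun k => pseudoHyp (l n) (l k) ^ m k) n) ∧
      ¬ (∃ δ > (0 : ℝ), ∀ z ∈ Metric.ball (0 : ℂ) 1,
          δ ≤ ⨆ n : ℕ, prodExcept (fun k => pseudoHyp z (l k) ^ m k) n) := by
  refine ⟨point m, point_mem_ball hpos, ⟨1 / 4, by norm_num, quarter_le_prodExcept hpos hmono⟩,
    ?_⟩
  rintro ⟨δ, hδ, huniform⟩
  obtain ⟨t, ht⟩ := exists_nat_gt (max 1 (-(3 * Real.log δ)))
  obtain ⟨n, hn⟩ := hunb (t * t)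
  have ht1 : 1 ≤ t := by exact_mod_cast (le_max_left _ _).trans ht.le
  obtain ⟨z, hz, hsmall⟩ := exists_iSup_prodExcept_le_exp hpos hmono (e := 2 * n) (by omega) ht1
    (hn.le.trans (hmono (by omega)))
  have hδt : Real.exp (-(t / 3)) < δ := by
    rw [← Real.exp_log hδ, Real.exp_lt_exp]
    linarith [le_max_right 1 (-(3 * Real.log δ))]
  linarith [huniform z hz]
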